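/- arXiv:1407.3581 — 3 statements merged into one kernel-verified Lean document; each statement's English description precedes it below -/
import Mathlib

section
/- Let ω₀ := H + (1/2)∫₀^π Q(t)dt. Then, as |ρ| → ∞, V(S(·,λ)) = cos(ρπ)·I_m + (sin(ρπ)/ρ)·ω₀ − (1/(2ρ))∫₀^π sin(ρ(π−2t))Q(t)dt + r₀(ρ)/ρ, where the remainder satisfies ‖r₀(ρ)‖ ≤ C·exp(|τ|π)/|ρ| for some constant C and all |ρ| sufficiently large. -/
/-!
Green's formula against `sin (ρ (x - t))` and `cos (ρ (x - t))` turns the equation into the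
Volterra equations `ρ S(x) = sin (ρx) + ∫₀ˣ sin (ρ(x-t)) Q(t) S(t) dt` and
`S'(x) = cos (ρx) + ∫₀ˣ cos (ρ(x-t)) Q(t) S(t) dt`. Since `‖sin w‖, ‖cos w‖ ≤ exp |Im w|`, the
first one evaluated where `exp (-|τ| x) ‖S(x)‖` is maximal gives `‖S(x)‖ ≤ 2 exp (|τ| x) / |ρ|` as
soon as `|ρ| ≥ 2 ∫₀^π ‖Q‖`, and then `S(x) = sin (ρx) / ρ + O(exp (|τ| x) / |ρ|²)`. Substituting
this into the second equation at `x = π`, the identity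
`2 cos (ρ(π-t)) sin (ρt) = sin (ρπ) - sin (ρ(π-2t))` produces the main terms, and everything else
is `O(exp (|τ| π) / |ρ|²)`.
-/

set_option autoImplicit false
set_option maxHeartbeats 1000000

open MeasureTheory Filter Topology Matrix Set intervalIntegral

noncomputable section

attribute [local instance] Matrix.linftyOpNormedAddCommGroup Matrix.linftyOpNormedSpace
  Matrix.linftyOpNormedRing Matrix.linftyOpNormedAlgebra

/-- Square complex matrices of size `m`. -/
abbrev Mat (m : ℕ) := Matrix (Fin m) (Fin m) ℂ

/-- Principal square root of a complex number (branch with nonnegative real part). -/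
def csqrt (z : ℂ) : ℂ := z ^ ((1 : ℂ)/2)

/-- `Y` (with derivative `Y'`) is a matrix solution of `-Y'' + Q Y = λ Y`, in integrated form. -/
def IsMatSol {m : ℕ} (Q : ℝ → Mat m) (lam : ℂ) (Y Y' : ℝ → Mat m) : Prop :=
  (∀ x : ℝ, HasDerivAt Y (Y' x) x) ∧
  (∀ x : ℝ, Y' x = Y' 0 + ∫ t in (0:ℝ)..x, (Q t * Y t - lam • Y t))

lemma Complex.norm_exp_mul_I_le (w : ℂ) : ‖Complex.exp (w * Complex.I)‖ ≤ Real.exp |w.im| := by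
  rw [Complex.norm_exp]
  exact Real.exp_le_exp.2 (by simpa using neg_le_abs w.im)

lemma Complex.norm_sin_le_exp_abs_im (w : ℂ) : ‖Complex.sin w‖ ≤ Real.exp |w.im| := by
  have hneg : ‖Complex.exp (-w * Complex.I)‖ ≤ Real.exp |w.im| := by
    simpa using Complex.norm_exp_mul_I_le (-w)
  rw [Complex.sin, norm_div, norm_mul, Complex.norm_I, mul_one, Complex.norm_two]
  linarith [Complex.norm_exp_mul_I_le w,
    norm_sub_le (Complex.exp (-w * Complex.I)) (Complex.exp (w * Complex.I))]

lemma Complex.norm_cos_le_exp_abs_im (w : ℂ) : ‖Complex.cos w‖ ≤ Real.exp |w.im| := by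
  have hneg : ‖Complex.exp (-w * Complex.I)‖ ≤ Real.exp |w.im| := by
    simpa using Complex.norm_exp_mul_I_le (-w)
  rw [Complex.cos, norm_div, Complex.norm_two]
  linarith [Complex.norm_exp_mul_I_le w,
    norm_add_le (Complex.exp (w * Complex.I)) (Complex.exp (-w * Complex.I))]

lemma Complex.norm_sin_mul_ofReal_le (ρ : ℂ) {s : ℝ} (hs : 0 ≤ s) :
    ‖Complex.sin (ρ * s)‖ ≤ Real.exp (|ρ.im| * s) := by
  simpa [abs_mul, abs_of_nonneg hs] using Complex.norm_sin_le_exp_abs_im (ρ * s)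

lemma Complex.norm_cos_mul_ofReal_le (ρ : ℂ) {s : ℝ} (hs : 0 ≤ s) :
    ‖Complex.cos (ρ * s)‖ ≤ Real.exp (|ρ.im| * s) := by
  simpa [abs_mul, abs_of_nonneg hs] using Complex.norm_cos_le_exp_abs_im (ρ * s)

lemma hasDerivAt_sin_mul_sub (ρ : ℂ) (b x : ℝ) :
    HasDerivAt (fun t : ℝ => Complex.sin (ρ * (b - t))) (-(ρ * Complex.cos (ρ * (b - x)))) x := by
  have := (((hasDerivAt_id (x : ℂ)).const_sub (b : ℂ)).const_mul ρ).csin.comp_ofReal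
  simpa [mul_comm] using this

lemma hasDerivAt_cos_mul_sub (ρ : ℂ) (b x : ℝ) :
    HasDerivAt (fun t : ℝ => Complex.cos (ρ * (b - t))) (ρ * Complex.sin (ρ * (b - x))) x := by
  have := (((hasDerivAt_id (x : ℂ)).const_sub (b : ℂ)).const_mul ρ).ccos.comp_ofReal
  simpa [mul_comm] using this

lemma Complex.cos_mul_sub_mul_sin_div (ρ ℓ t : ℂ) :
    Complex.cos (ρ * (ℓ - t)) * (Complex.sin (ρ * t) / ρ)
      = Complex.sin (ρ * ℓ) / ρ * 2⁻¹ - 1 / (2 * ρ) * Complex.sin (ρ * (ℓ - 2 * t)) := by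
  have hadd := Complex.sin_add (ρ * (ℓ - t)) (ρ * t)
  have hsub := Complex.sin_sub (ρ * (ℓ - t)) (ρ * t)
  rw [show ρ * (ℓ - t) + ρ * t = ρ * ℓ by ring] at hadd
  rw [show ρ * (ℓ - t) - ρ * t = ρ * (ℓ - 2 * t) by ring] at hsub
  linear_combination (ρ⁻¹ / 2) * (hsub - hadd)

section IntegrationByParts

variable {E : Type*} [NormedAddCommGroup E] [NormedSpace ℂ E] [CompleteSpace E] {b : ℝ}

/-- Fubini on the triangle `0 < s ≤ t ≤ b`. -/
theorem intervalIntegral_smul_primitive_swap {g : ℝ → ℂ} {F : ℝ → E} (hb : 0 ≤ b)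
    (hg : IntervalIntegrable g volume 0 b) (hF : IntervalIntegrable F volume 0 b) :
    ∫ t in (0:ℝ)..b, g t • ∫ s in (0:ℝ)..t, F s =
      ∫ s in (0:ℝ)..b, (∫ t in s..b, g t) • F s := by
  set μ := volume.restrict (Ioc (0:ℝ) b)
  set f : ℝ → ℝ → E := fun t s => {p : ℝ × ℝ | p.2 ≤ p.1}.indicator (fun p => g p.1 • F p.2) (t, s)
  have hf : Integrable (Function.uncurry f) (μ.prod μ) := by
    refine Integrable.indicator ?_ (measurableSet_le measurable_snd measurable_fst)
    rw [intervalIntegrable_iff_integrableOn_Ioc_of_le hb] at hg hF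
    exact hg.smul_prod hF
  have hslice_t : ∀ t ∈ Ioc 0 b, ∫ s, f t s ∂μ = g t • ∫ s in (0:ℝ)..t, F s := by
    intro t ht
    have : f t = (Iic t).indicator (fun s => g t • F s) := by
      ext s; by_cases hs : s ≤ t <;> simp [f, hs]
    rw [this, MeasureTheory.integral_indicator measurableSet_Iic,
      Measure.restrict_restrict measurableSet_Iic, Iic_inter_Ioc_of_le ht.2,
      MeasureTheory.integral_smul, intervalIntegral.integral_of_le ht.1.le]
  have hslice_s : ∀ s ∈ Ioc 0 b, ∫ t, f t s ∂μ = (∫ t in s..b, g t) • F s := by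
    intro s hs
    have : (fun t => f t s) = (Ici s).indicator (fun t => g t • F s) := by
      ext t; by_cases ht : s ≤ t <;> simp [f, ht]
    rw [this, MeasureTheory.integral_indicator measurableSet_Ici,
      Measure.restrict_restrict measurableSet_Ici, _root_.integral_smul_const]
    have hIcc : Ici s ∩ Ioc 0 b = Icc s b := by
      ext t
      simp only [mem_inter_iff, mem_Ici, mem_Ioc, mem_Icc]
      exact ⟨fun h => ⟨h.1, h.2.2⟩, fun h => ⟨h.1, hs.1.trans_le h.1, h.2⟩⟩
    rw [hIcc, integral_Icc_eq_integral_Ioc, ← intervalIntegral.integral_of_le hs.2]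
  simp only [intervalIntegral.integral_of_le hb]
  rw [← setIntegral_congr_fun measurableSet_Ioc hslice_t,
    ← setIntegral_congr_fun measurableSet_Ioc hslice_s]
  exact integral_integral_swap hf

theorem integral_smul_deriv_eq_deriv_smul_of_primitive {φ φ' : ℝ → ℂ} {F P : ℝ → E}
    (hb : 0 ≤ b) (hφ : ∀ x, HasDerivAt φ (φ' x) x) (hφ' : Continuous φ')
    (hF : IntervalIntegrable F volume 0 b) (hP : ∀ x ∈ Icc 0 b, P x = P 0 + ∫ s in (0:ℝ)..x, F s) :
    ∫ t in (0:ℝ)..b, φ t • F t = φ b • P b - φ 0 • P 0 - ∫ t in (0:ℝ)..b, φ' t • P t := by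
  have hφc : Continuous φ := continuous_iff_continuousAt.2 fun x => (hφ x).continuousAt
  have hFTC (s : ℝ) : ∫ t in s..b, φ' t = φ b - φ s :=
    integral_eq_sub_of_hasDerivAt (fun x _ => hφ x) (hφ'.intervalIntegrable s b)
  have hswap := intervalIntegral_smul_primitive_swap hb (hφ'.intervalIntegrable 0 b) hF
  simp only [hFTC, sub_smul] at hswap
  rw [integral_sub (hF.continuousOn_smul continuousOn_const)
    (hF.continuousOn_smul hφc.continuousOn), intervalIntegral.integral_smul] at hswap
  have hprim : ContinuousOn (fun t => ∫ s in (0:ℝ)..t, F s) (uIcc 0 b) :=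
    continuousOn_primitive_interval' hF left_mem_uIcc
  have hP' : ∫ t in (0:ℝ)..b, φ' t • P t
      = (φ b - φ 0) • P 0 + ∫ t in (0:ℝ)..b, φ' t • ∫ s in (0:ℝ)..t, F s := by
    rw [integral_congr fun t ht => by rw [hP t (uIcc_of_le hb ▸ ht), smul_add],
      integral_add ((hφ'.intervalIntegrable 0 b).smul_continuousOn continuousOn_const)
        (ContinuousOn.intervalIntegrable (u := fun t => φ' t • ∫ s in (0:ℝ)..t, F s)
          (hφ'.continuousOn.smul hprim)),
      intervalIntegral.integral_smul_const, hFTC]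
  rw [hP', hP b ⟨hb, le_rfl⟩, hswap, smul_add, sub_smul]
  abel

/-- Green's formula. `Y'` is only a primitive of the integrable `G - zY`, so `Y'` cannot be
differentiated; the integration by parts against it goes through Fubini instead. -/
theorem integral_smul_eq_wronskian_sub {z : ℂ} {φ φ' : ℝ → ℂ} {G Y Y' : ℝ → E}
    (hφ : ∀ x, HasDerivAt φ (φ' x) x) (hφ' : ∀ x, HasDerivAt φ' (-(z * φ x)) x)
    (hY : ∀ x, HasDerivAt Y (Y' x) x) (hY' : ∀ x, Y' x = Y' 0 + ∫ t in (0:ℝ)..x, (G t - z • Y t))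
    (hb : 0 ≤ b) (hG : IntervalIntegrable G volume 0 b) :
    ∫ t in (0:ℝ)..b, φ t • G t = (φ b • Y' b - φ' b • Y b) - (φ 0 • Y' 0 - φ' 0 • Y 0) := by
  have hφc : Continuous φ := continuous_iff_continuousAt.2 fun x => (hφ x).continuousAt
  have hφ'c : Continuous φ' := continuous_iff_continuousAt.2 fun x => (hφ' x).continuousAt
  have hYc : Continuous Y := continuous_iff_continuousAt.2 fun x => (hY x).continuousAt
  have hGY : IntervalIntegrable (fun t => G t - z • Y t) volume 0 b :=
    hG.sub ((hYc.const_smul z).intervalIntegrable 0 b)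
  have hY'c : ContinuousOn Y' (uIcc 0 b) :=
    (continuousOn_const.add (continuousOn_primitive_interval' hGY left_mem_uIcc)).congr
      fun x _ => hY' x
  have hφzY : IntervalIntegrable (fun t => (-(z * φ t)) • Y t) volume 0 b :=
    ((hφc.const_smul z).neg.smul hYc).intervalIntegrable 0 b
  have hsplit : ∫ t in (0:ℝ)..b, φ t • G t
      = (∫ t in (0:ℝ)..b, φ t • (G t - z • Y t)) - ∫ t in (0:ℝ)..b, (-(z * φ t)) • Y t := by
    rw [← integral_sub (hGY.continuousOn_smul hφc.continuousOn) hφzY]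
    congr 1; ext t
    rw [smul_sub, smul_smul, neg_smul, sub_neg_eq_add, mul_comm, sub_add_cancel]
  rw [hsplit, integral_smul_deriv_eq_deriv_smul_of_primitive hb hφ hφ'c hGY fun x _ => hY' x,
    integral_smul_deriv_eq_deriv_smul_of_hasDerivAt hφ'c.continuousOn hYc.continuousOn
      (fun x _ => hφ' x) (fun x _ => hY x) ((hφc.const_mul z).neg.intervalIntegrable 0 b)
      hY'c.intervalIntegrable]
  abel

end IntegrationByParts

lemma IntervalIntegrable.mono_of_mem_Icc {E : Type*} [NormedAddCommGroup E] {f : ℝ → E}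
    {b ℓ : ℝ} (hf : IntervalIntegrable f volume 0 ℓ) (hb : b ∈ Icc 0 ℓ) :
    IntervalIntegrable f volume 0 b :=
  hf.mono_set (uIcc_subset_uIcc_left (by rwa [uIcc_of_le (hb.1.trans hb.2)]))

theorem norm_integral_smul_mul_le {A : Type*} [NormedRing A] [NormedSpace ℂ A]
    {ψ : ℝ → ℂ} {Q W : ℝ → A} {b ℓ τ c : ℝ} (hb : b ∈ Icc 0 ℓ) (hc : 0 ≤ c)
    (hQ : IntervalIntegrable Q volume 0 ℓ)
    (hψ : ∀ t ∈ Ioc 0 b, ‖ψ t‖ ≤ Real.exp (τ * (b - t)))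
    (hW : ∀ t ∈ Ioc 0 b, ‖W t‖ ≤ c * Real.exp (τ * t)) :
    ‖∫ t in (0:ℝ)..b, ψ t • (Q t * W t)‖ ≤ c * Real.exp (τ * b) * ∫ t in (0:ℝ)..ℓ, ‖Q t‖ := by
  calc ‖∫ t in (0:ℝ)..b, ψ t • (Q t * W t)‖
      ≤ ∫ t in (0:ℝ)..b, c * Real.exp (τ * b) * ‖Q t‖ := by
        refine norm_integral_le_of_norm_le hb.1 (ae_of_all _ fun t ht => ?_) ((hQ.norm.mono_of_mem_Icc hb).const_mul _)
        calc ‖ψ t • (Q t * W t)‖ ≤ Real.exp (τ * (b - t)) * (‖Q t‖ * (c * Real.exp (τ * t))) := by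
              rw [norm_smul]
              gcongr
              · exact hψ t ht
              · exact (norm_mul_le _ _).trans (by gcongr; exact hW t ht)
          _ = c * Real.exp (τ * b) * ‖Q t‖ := by
              rw [show τ * b = τ * (b - t) + τ * t by ring, Real.exp_add]; ring
    _ = c * Real.exp (τ * b) * ∫ t in (0:ℝ)..b, ‖Q t‖ := integral_const_mul _ _
    _ ≤ c * Real.exp (τ * b) * ∫ t in (0:ℝ)..ℓ, ‖Q t‖ := by
        gcongr
        exact integral_mono_interval le_rfl hb.1 hb.2 (ae_of_all _ fun _ => norm_nonneg _) hQ.norm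

/-- Instance search does not see that the `L∞`-operator norm on `Mat m` induces the product
topology of `Matrix`, so the integrability API on `Mat m` needs this instance by hand. -/
instance Mat.instENormedAddCommMonoid (m : ℕ) : ENormedAddCommMonoid (Mat m) :=
  NormedAddCommGroup.toENormedAddCommMonoid

lemma Matrix.linfty_opNorm_one_le {n α : Type*} [Fintype n] [DecidableEq n] [NormedRing α]
    [NormOneClass α] : ‖(1 : Matrix n n α)‖ ≤ 1 := by
  rw [← Matrix.diagonal_one, Matrix.linfty_opNorm_diagonal]
  exact (pi_norm_const_le (1 : α)).trans norm_one.le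

lemma Mat.intervalIntegrable_of_memLp {m : ℕ} {Q : ℝ → Mat m} {p : ENNReal} {a b : ℝ}
    (hp : 1 ≤ p) (hab : a ≤ b)
    (hQ : ∀ j k : Fin m, MemLp (fun x => Q x j k) p (volume.restrict (Ioo a b))) :
    IntervalIntegrable Q volume a b := by
  have : IsFiniteMeasure (volume.restrict (Ioc a b)) :=
    isFiniteMeasure_restrict.2 measure_Ioc_lt_top.ne
  rw [Measure.restrict_congr_set Ioo_ae_eq_Ioc] at hQ
  let L : (Fin m → Fin m → ℂ) →L[ℂ] Mat m :=
    LinearMap.toContinuousLinearMap (Matrix.ofLinearEquiv ℂ).toLinearMap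
  refine ⟨L.integrable_comp ?_, by simp [Ioc_eq_empty_of_le hab]⟩
  exact integrable_pi_iff.2 fun j => integrable_pi_iff.2 fun k => (hQ j k).integrable hp

namespace IsMatSol

variable {m : ℕ} {Q : ℝ → Mat m} {z ρ : ℂ} {Y Y' : ℝ → Mat m} {b ℓ : ℝ}

lemma continuous (hY : IsMatSol Q z Y Y') : Continuous Y :=
  continuous_iff_continuousAt.2 fun x => (hY.1 x).continuousAt

theorem smul_eq_sin_add_integral (hY : IsMatSol Q z Y Y') (hρ : ρ * ρ = z) (hY0 : Y 0 = 0)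
    (hY'0 : Y' 0 = 1) (hb : 0 ≤ b) (hQ : IntervalIntegrable Q volume 0 b) :
    ρ • Y b = Complex.sin (ρ * b) • (1 : Mat m)
      + ∫ t in (0:ℝ)..b, Complex.sin (ρ * (b - t)) • (Q t * Y t) := by
  have h := integral_smul_eq_wronskian_sub (hasDerivAt_sin_mul_sub ρ b)
    (fun x => ((hasDerivAt_cos_mul_sub ρ b x).const_mul ρ).neg.congr_deriv (by rw [← hρ]; ring))
    hY.1 hY.2 hb (hQ.mul_continuousOn hY.continuous.continuousOn)
  simp only [hY0, hY'0, sub_self, mul_zero, Complex.sin_zero, Complex.cos_zero, sub_zero,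
    zero_smul, smul_zero, mul_one, neg_smul, sub_neg_eq_add, Complex.ofReal_zero] at h
  rw [h]
  abel

theorem deriv_eq_cos_add_integral (hY : IsMatSol Q z Y Y') (hρ : ρ * ρ = z) (hY0 : Y 0 = 0)
    (hY'0 : Y' 0 = 1) (hb : 0 ≤ b) (hQ : IntervalIntegrable Q volume 0 b) :
    Y' b = Complex.cos (ρ * b) • (1 : Mat m)
      + ∫ t in (0:ℝ)..b, Complex.cos (ρ * (b - t)) • (Q t * Y t) := by
  have h := integral_smul_eq_wronskian_sub (hasDerivAt_cos_mul_sub ρ b)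
    (fun x => ((hasDerivAt_sin_mul_sub ρ b x).const_mul ρ).congr_deriv (by rw [← hρ]; ring))
    hY.1 hY.2 hb (hQ.mul_continuousOn hY.continuous.continuousOn)
  simp only [hY0, hY'0, sub_self, mul_zero, Complex.sin_zero, Complex.cos_zero, sub_zero,
    zero_smul, smul_zero, one_smul, Complex.ofReal_zero] at h
  rw [h]
  abel

theorem norm_le_two_div_mul_exp (hY : IsMatSol Q z Y Y') (hρ : ρ * ρ = z) (hY0 : Y 0 = 0)
    (hY'0 : Y' 0 = 1) (hℓ : 0 ≤ ℓ) (hQ : IntervalIntegrable Q volume 0 ℓ) (hρ0 : ρ ≠ 0)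
    (hK : 2 * ∫ t in (0:ℝ)..ℓ, ‖Q t‖ ≤ ‖ρ‖) {x : ℝ} (hx : x ∈ Icc 0 ℓ) :
    ‖Y x‖ ≤ 2 / ‖ρ‖ * Real.exp (|ρ.im| * x) := by
  set τ := |ρ.im|
  set K := ∫ t in (0:ℝ)..ℓ, ‖Q t‖
  have hK0 : 0 ≤ K := integral_nonneg hℓ fun _ _ => norm_nonneg _
  have hρpos : 0 < ‖ρ‖ := norm_pos_iff.2 hρ0
  obtain ⟨x₀, hx₀, hmax⟩ := isCompact_Icc.exists_isMaxOn (nonempty_Icc.2 hℓ)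
    ((Real.continuous_exp.comp (continuous_const.mul continuous_id).neg).mul
      hY.continuous.norm).continuousOn
  set M := Real.exp (-(τ * x₀)) * ‖Y x₀‖
  have hM0 : 0 ≤ M := by positivity
  have hMY : ∀ t ∈ Icc 0 ℓ, ‖Y t‖ ≤ M * Real.exp (τ * t) := fun t ht => by
    have : Real.exp (-(τ * t)) * ‖Y t‖ ≤ M := hmax ht
    rwa [Real.exp_neg, inv_mul_le_iff₀ (Real.exp_pos _), mul_comm] at this
  have hYx₀ : ‖ρ‖ * ‖Y x₀‖ ≤ Real.exp (τ * x₀) + M * Real.exp (τ * x₀) * K := by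
    rw [← norm_smul, hY.smul_eq_sin_add_integral hρ hY0 hY'0 hx₀.1 (hQ.mono_of_mem_Icc hx₀)]
    refine (norm_add_le _ _).trans (add_le_add ?_ ?_)
    · rw [norm_smul, ← mul_one (Real.exp _)]
      exact mul_le_mul (Complex.norm_sin_mul_ofReal_le ρ hx₀.1) Matrix.linfty_opNorm_one_le
        (norm_nonneg _) (Real.exp_nonneg _)
    · refine norm_integral_smul_mul_le hx₀ hM0 hQ (fun t ht => ?_)
        fun t ht => hMY t ⟨ht.1.le, ht.2.trans hx₀.2⟩
      simpa using Complex.norm_sin_mul_ofReal_le ρ (sub_nonneg.2 ht.2)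
  have hρM : ‖ρ‖ * M ≤ 1 + M * K :=
    calc ‖ρ‖ * M = Real.exp (-(τ * x₀)) * (‖ρ‖ * ‖Y x₀‖) := by ring
      _ ≤ Real.exp (-(τ * x₀)) * (Real.exp (τ * x₀) * (1 + M * K)) :=
          mul_le_mul_of_nonneg_left (hYx₀.trans_eq (by ring)) (Real.exp_nonneg _)
      _ = 1 + M * K := by rw [← mul_assoc, ← Real.exp_add, neg_add_cancel, Real.exp_zero, one_mul]
  have hM : M ≤ 2 / ‖ρ‖ := by
    rw [le_div_iff₀ hρpos]
    nlinarith
  calc ‖Y x‖ ≤ M * Real.exp (τ * x) := hMY x hx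
    _ ≤ 2 / ‖ρ‖ * Real.exp (τ * x) := by gcongr

theorem norm_sub_sin_div_smul_one_le (hY : IsMatSol Q z Y Y') (hρ : ρ * ρ = z) (hY0 : Y 0 = 0)
    (hY'0 : Y' 0 = 1) (hℓ : 0 ≤ ℓ) (hQ : IntervalIntegrable Q volume 0 ℓ) (hρ0 : ρ ≠ 0)
    (hK : 2 * ∫ t in (0:ℝ)..ℓ, ‖Q t‖ ≤ ‖ρ‖) {x : ℝ} (hx : x ∈ Icc 0 ℓ) :
    ‖Y x - (Complex.sin (ρ * x) / ρ) • (1 : Mat m)‖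
      ≤ 2 * (∫ t in (0:ℝ)..ℓ, ‖Q t‖) / ‖ρ‖ ^ 2 * Real.exp (|ρ.im| * x) := by
  have hρpos : 0 < ‖ρ‖ := norm_pos_iff.2 hρ0
  have hrepr : Y x - (Complex.sin (ρ * x) / ρ) • (1 : Mat m)
      = ρ⁻¹ • ∫ t in (0:ℝ)..x, Complex.sin (ρ * (x - t)) • (Q t * Y t) := by
    rw [eq_inv_smul_iff₀ hρ0, smul_sub, hY.smul_eq_sin_add_integral hρ hY0 hY'0 hx.1
      (hQ.mono_of_mem_Icc hx), smul_smul, mul_div_cancel₀ _ hρ0, add_sub_cancel_left]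
  have hint := norm_integral_smul_mul_le (ψ := fun t => Complex.sin (ρ * (x - t))) hx
    (by positivity) hQ
    (fun t ht => by simpa using Complex.norm_sin_mul_ofReal_le ρ (sub_nonneg.2 ht.2))
    (fun t ht => hY.norm_le_two_div_mul_exp hρ hY0 hY'0 hℓ hQ hρ0 hK ⟨ht.1.le, ht.2.trans hx.2⟩)
  rw [hrepr, norm_smul, norm_inv]
  calc ‖ρ‖⁻¹ * ‖∫ t in (0:ℝ)..x, Complex.sin (ρ * (x - t)) • (Q t * Y t)‖
      ≤ ‖ρ‖⁻¹ * (2 / ‖ρ‖ * Real.exp (|ρ.im| * x) * ∫ t in (0:ℝ)..ℓ, ‖Q t‖) := by gcongr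
    _ = _ := by field_simp

theorem boundary_sub_eq (hY : IsMatSol Q z Y Y') (hρ : ρ * ρ = z) (hY0 : Y 0 = 0)
    (hY'0 : Y' 0 = 1) (hℓ : 0 ≤ ℓ) (hQ : IntervalIntegrable Q volume 0 ℓ) (H : Mat m) :
    (Y' ℓ + H * Y ℓ)
        - (Complex.cos (ρ * ℓ) • (1 : Mat m)
          + (Complex.sin (ρ * ℓ) / ρ) • (H + (2⁻¹ : ℂ) • ∫ t in (0:ℝ)..ℓ, Q t)
          - (1 / (2 * ρ)) • ∫ t in (0:ℝ)..ℓ, Complex.sin (ρ * (ℓ - 2 * t)) • Q t)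
      = (∫ t in (0:ℝ)..ℓ,
          Complex.cos (ρ * (ℓ - t)) • (Q t * (Y t - (Complex.sin (ρ * t) / ρ) • (1 : Mat m))))
        + H * (Y ℓ - (Complex.sin (ρ * ℓ) / ρ) • (1 : Mat m)) := by
  set E : ℝ → Mat m := fun t => Y t - (Complex.sin (ρ * t) / ρ) • (1 : Mat m)
  have hE : Continuous E := hY.continuous.sub (by fun_prop)
  have hpt (t : ℝ) : Complex.cos (ρ * (ℓ - t)) • (Q t * Y t)
      = (Complex.sin (ρ * ℓ) / ρ * 2⁻¹) • Q t
        - (1 / (2 * ρ)) • (Complex.sin (ρ * (ℓ - 2 * t)) • Q t)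
        + Complex.cos (ρ * (ℓ - t)) • (Q t * E t) := by
    simp only [E, Matrix.mul_sub, mul_smul_comm, mul_one]
    linear_combination (norm := module) Complex.cos_mul_sub_mul_sin_div ρ ℓ t • Q t
  have hsin : IntervalIntegrable (fun t => Complex.sin (ρ * (ℓ - 2 * t)) • Q t) volume 0 ℓ :=
    hQ.continuousOn_smul (by fun_prop)
  rw [hY.deriv_eq_cos_add_integral hρ hY0 hY'0 hℓ hQ, integral_congr fun t _ => hpt t,
    integral_add ((hQ.continuousOn_smul continuousOn_const).sub
      (hsin.continuousOn_smul continuousOn_const))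
      ((hQ.mul_continuousOn hE.continuousOn).continuousOn_smul (by fun_prop)),
    integral_sub (hQ.continuousOn_smul continuousOn_const)
      (hsin.continuousOn_smul continuousOn_const),
    intervalIntegral.integral_smul, intervalIntegral.integral_smul]
  simp only [E, Matrix.mul_sub, mul_smul_comm, mul_one]
  module

theorem norm_boundary_sub_le (hY : IsMatSol Q z Y Y') (hρ : ρ * ρ = z) (hY0 : Y 0 = 0)
    (hY'0 : Y' 0 = 1) (hℓ : 0 ≤ ℓ) (hQ : IntervalIntegrable Q volume 0 ℓ) (hρ0 : ρ ≠ 0)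
    (hK : 2 * ∫ t in (0:ℝ)..ℓ, ‖Q t‖ ≤ ‖ρ‖) (H : Mat m) :
    ‖(Y' ℓ + H * Y ℓ)
        - (Complex.cos (ρ * ℓ) • (1 : Mat m)
          + (Complex.sin (ρ * ℓ) / ρ) • (H + (2⁻¹ : ℂ) • ∫ t in (0:ℝ)..ℓ, Q t)
          - (1 / (2 * ρ)) • ∫ t in (0:ℝ)..ℓ, Complex.sin (ρ * (ℓ - 2 * t)) • Q t)‖
      ≤ 2 * (∫ t in (0:ℝ)..ℓ, ‖Q t‖) * ((∫ t in (0:ℝ)..ℓ, ‖Q t‖) + ‖H‖)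
          * Real.exp (|ρ.im| * ℓ) / ‖ρ‖ ^ 2 := by
  set K := ∫ t in (0:ℝ)..ℓ, ‖Q t‖
  have hK0 : 0 ≤ K := integral_nonneg hℓ fun _ _ => norm_nonneg _
  have hdev {x : ℝ} (hx : x ∈ Icc 0 ℓ) :=
    hY.norm_sub_sin_div_smul_one_le hρ hY0 hY'0 hℓ hQ hρ0 hK hx
  have hint := norm_integral_smul_mul_le (ψ := fun t => Complex.cos (ρ * (ℓ - t)))
    ⟨hℓ, le_rfl⟩ (by positivity [hK0]) hQ
    (fun t ht => by simpa using Complex.norm_cos_mul_ofReal_le ρ (sub_nonneg.2 ht.2))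
    (fun t ht => hdev ⟨ht.1.le, ht.2⟩)
  have hHE := (norm_mul_le H _).trans
    (mul_le_mul_of_nonneg_left (hdev ⟨hℓ, le_rfl⟩) (norm_nonneg H))
  rw [hY.boundary_sub_eq hρ hY0 hY'0 hℓ hQ H]
  calc _ ≤ _ := norm_add_le _ _
    _ ≤ _ := add_le_add hint hHE
    _ = _ := by ring

end IsMatSol

lemma csqrt_mul_self (z : ℂ) : csqrt z * csqrt z = z := by
  simp only [csqrt, one_div, ← sq, Complex.cpow_ofNat_inv_pow]

theorem statement2_general
    (m : ℕ)
    (Q : ℝ → Mat m)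
    (hQL2 : ∀ j k : Fin m, MemLp (fun x => Q x j k) 2 (volume.restrict (Set.Ioo 0 Real.pi)))
    (H : Mat m)
    (ω₀ : Mat m) (hω₀ : ω₀ = H + (2⁻¹ : ℂ) • ∫ t in (0:ℝ)..Real.pi, Q t)
    (S S' : ℂ → ℝ → Mat m)
    (hSsol : ∀ z : ℂ, IsMatSol Q z (S z) (S' z))
    (hS0 : ∀ z : ℂ, S z 0 = 0) (hS'0 : ∀ z : ℂ, S' z 0 = 1) :
    ∃ C > (0:ℝ), ∃ R > (0:ℝ), ∀ z : ℂ, R ≤ ‖csqrt z‖ →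
      ‖(S' z Real.pi + H * S z Real.pi)
          - (Complex.cos (csqrt z * Real.pi) • (1 : Mat m)
            + (Complex.sin (csqrt z * Real.pi) / csqrt z) • ω₀
            - (1 / (2 * csqrt z)) • ∫ t in (0:ℝ)..Real.pi,
                Complex.sin (csqrt z * (Real.pi - 2 * t)) • Q t)‖
        ≤ C * Real.exp (|(csqrt z).im| * Real.pi) / (‖csqrt z‖)^2 := by
  have hQ : IntervalIntegrable Q volume 0 Real.pi :=
    Mat.intervalIntegrable_of_memLp one_le_two Real.pi_pos.le hQL2
  set K := ∫ t in (0:ℝ)..Real.pi, ‖Q t‖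
  have hK0 : 0 ≤ K := integral_nonneg Real.pi_pos.le fun _ _ => norm_nonneg _
  refine ⟨2 * K * (K + ‖H‖) + 1, by positivity, 2 * K + 1, by positivity, fun z hz => ?_⟩
  have hρ0 : csqrt z ≠ 0 := norm_pos_iff.1 (by linarith)
  subst hω₀
  refine ((hSsol z).norm_boundary_sub_le (csqrt_mul_self z) (hS0 z) (hS'0 z) Real.pi_pos.le hQ
    hρ0 (by linarith) H).trans ?_
  gcongr
  linarith

/-- the asymptotics
`V(S) = cos(ρπ)·I + (sin(ρπ)/ρ)·ω₀ − (1/(2ρ))∫₀^π sin(ρ(π−2t))Q(t)dt + O(exp(|τ|π)/|ρ|²)`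
as `|ρ| → ∞`, where `ρ = √λ` (Re ρ ≥ 0), `τ = Im ρ`, and `ω₀ = H + (1/2)∫₀^π Q(t)dt`;
the remainder is `r₀(ρ)/ρ` with `‖r₀(ρ)‖ ≤ C·exp(|τ|π)/|ρ|`. -/
theorem statement2
    (m : ℕ) (hm : 1 ≤ m)
    (Q : ℝ → Mat m)
    (hQL2 : ∀ j k : Fin m, MemLp (fun x => Q x j k) 2 (volume.restrict (Set.Ioo 0 Real.pi)))
    (h H : Mat m)
    (ω₀ : Mat m) (hω₀ : ω₀ = H + (2⁻¹ : ℂ) • ∫ t in (0:ℝ)..Real.pi, Q t)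
    (S S' : ℂ → ℝ → Mat m)
    (hSsol : ∀ z : ℂ, IsMatSol Q z (S z) (S' z))
    (hS0 : ∀ z : ℂ, S z 0 = 0) (hS'0 : ∀ z : ℂ, S' z 0 = 1) :
    ∃ C > (0:ℝ), ∃ R > (0:ℝ), ∀ z : ℂ, R ≤ ‖csqrt z‖ →
      ‖(S' z Real.pi + H * S z Real.pi)
          - (Complex.cos (csqrt z * Real.pi) • (1 : Mat m)
            + (Complex.sin (csqrt z * Real.pi) / csqrt z) • ω₀
            - (1 / (2 * csqrt z)) • ∫ t in (0:ℝ)..Real.pi,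
                Complex.sin (csqrt z * (Real.pi - 2 * t)) • Q t)‖
        ≤ C * Real.exp (|(csqrt z).im| * Real.pi) / (‖csqrt z‖)^2 :=
  statement2_general m Q hQL2 H ω₀ hω₀ S S' hSsol hS0 hS'0
end
end

section
/- Let Φ(x,λ) be the Weyl solution of L, i.e. the m×m matrix solution of −Y'' + Q(x)Y = λY with U(Φ) = I_m and V(Φ) = 0_m, and let Φ*(x,λ) be the m×m matrix solution of −Z'' + Z Q(x) = λZ with U*(Φ*) = I_m and V*(Φ*) = 0_m. Then M(λ) := Φ(0,λ) and M*(λ) := Φ*(0,λ) coincide identically: M(λ) ≡ M*(λ) for all λ at which both are defined. -/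
/-!
For a solution `Y` of `-Y'' + QY = λY` and a solution `Z` of `-Z'' + ZQ = λZ`, the matrix
Wronskian `Z'Y - ZY'` is constant on `[0, π]`: formally its derivative is
`Z''Y - ZY'' = (ZQ - λZ)Y - Z(QY - λY) = 0`. Since `Q` is only integrable, `Y'` and `Z'` are
merely primitives of integrable functions, so this is made rigorous by integrating by parts
against a primitive, which reduces to Fubini on the triangle `a < t < s < b`.
For the Weyl solutions the boundary conditions at `π` make the Wronskian vanish there, while at
`0` they turn it into `(I + Φ*(0) h) Φ(0) - Φ*(0) (I + h Φ(0)) = Φ(0) - Φ*(0)`.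
-/

set_option autoImplicit false
set_option maxHeartbeats 1000000

open MeasureTheory Filter Topology Matrix Set intervalIntegral

noncomputable section

attribute [local instance] Matrix.linftyOpNormedAddCommGroup Matrix.linftyOpNormedSpace
  Matrix.linftyOpNormedRing Matrix.linftyOpNormedAlgebra

/-- every singularity of `F` is (at most) a simple pole. -/
def AllPolesSimple {m : ℕ} (F : ℂ → Mat m) : Prop :=
  ∀ z₀ : ℂ, ∃ A : Mat m, Filter.Tendsto (fun z => (z - z₀) • F z) (𝓝[≠] z₀) (𝓝 A)

/-- `A` is the residue of `F` at the simple pole `z₀`. -/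
def IsResidueAt {m : ℕ} (F : ℂ → Mat m) (z₀ : ℂ) (A : Mat m) : Prop :=
  Filter.Tendsto (fun z => (z - z₀) • F z) (𝓝[≠] z₀) (𝓝 A)

/-- `Z` (with derivative `Z'`) is a matrix solution of `-Z'' + Z Q = λ Z` (adjoint form). -/
def IsMatSolR {m : ℕ} (Q : ℝ → Mat m) (lam : ℂ) (Z Z' : ℝ → Mat m) : Prop :=
  (∀ x : ℝ, HasDerivAt Z (Z' x) x) ∧
  (∀ x : ℝ, Z' x = Z' 0 + ∫ t in (0:ℝ)..x, (Z t * Q t - lam • Z t))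

-- The norm on matrices is a local instance whose topology is not reducibly the product
-- topology `instTopologicalSpaceMatrix`, so instance search does not find these by itself.
instance Matrix.linftyOpENormedAddCommMonoid {ι κ α : Type*} [Fintype ι] [Fintype κ]
    [NormedAddCommGroup α] : ENormedAddCommMonoid (Matrix ι κ α) :=
  NormedAddCommGroup.toENormedAddCommMonoid

instance Matrix.linftyOpPseudoMetrizableSpace {ι κ α : Type*} [Fintype ι] [Fintype κ]
    [NormedAddCommGroup α] : TopologicalSpace.PseudoMetrizableSpace (Matrix ι κ α) :=
  PseudoEMetricSpace.pseudoMetrizableSpace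

section BilinearIntegrationByParts

variable {E F G : Type*} [NormedAddCommGroup E] [NormedSpace ℝ E] [NormedAddCommGroup F]
  [NormedSpace ℝ F] [NormedAddCommGroup G] [NormedSpace ℝ G] (B : E →L[ℝ] F →L[ℝ] G)

theorem IntervalIntegrable.bilinear_continuousOn {f : ℝ → E} {g : ℝ → F} {a b : ℝ}
    (hf : IntervalIntegrable f volume a b) (hg : ContinuousOn g (uIcc a b)) :
    IntervalIntegrable (fun t => B (f t) (g t)) volume a b := by
  obtain ⟨C, hC⟩ := isCompact_uIcc.exists_bound_of_continuousOn hg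
  rw [intervalIntegrable_iff] at hf ⊢
  refine (hf.norm.mul_const (‖B‖ * C)).mono'
    (B.aestronglyMeasurable_comp₂ hf.aestronglyMeasurable
      ((hg.mono uIoc_subset_uIcc).aestronglyMeasurable measurableSet_uIoc)) ?_
  refine ae_restrict_of_forall_mem measurableSet_uIoc fun t ht => ?_
  calc ‖B (f t) (g t)‖ ≤ ‖B‖ * ‖f t‖ * ‖g t‖ := B.le_opNorm₂ _ _
    _ ≤ ‖B‖ * ‖f t‖ * C := by gcongr; exact hC t (uIoc_subset_uIcc ht)
    _ = ‖f t‖ * (‖B‖ * C) := by ring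

theorem IntervalIntegrable.continuousOn_bilinear {f : ℝ → F} {g : ℝ → E} {a b : ℝ}
    (hf : IntervalIntegrable f volume a b) (hg : ContinuousOn g (uIcc a b)) :
    IntervalIntegrable (fun t => B (g t) (f t)) volume a b :=
  hf.bilinear_continuousOn B.flip hg

theorem continuousOn_of_eq_add_primitive {u u' : ℝ → E} {a b : ℝ} (hab : a ≤ b)
    (hu' : IntervalIntegrable u' volume a b) (hu : ∀ x ∈ Icc a b, u x = u a + ∫ t in a..x, u' t) :
    ContinuousOn u (Icc a b) := by
  rw [← uIcc_of_le hab] at hu ⊢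
  exact (continuousOn_const.add
    (intervalIntegral.continuousOn_primitive_interval' hu' left_mem_uIcc)).congr hu

variable [CompleteSpace E] [CompleteSpace F] [CompleteSpace G]

theorem intervalIntegral_bilinear_integral_swap {f : ℝ → E} {g : ℝ → F} {a b : ℝ} (hab : a ≤ b)
    (hf : IntervalIntegrable f volume a b) (hg : IntervalIntegrable g volume a b) :
    ∫ t in a..b, B (f t) (∫ s in t..b, g s) = ∫ s in a..b, B (∫ t in a..s, f t) (g s) := by
  rw [intervalIntegrable_iff_integrableOn_Ioc_of_le hab] at hf hg
  set μ := volume.restrict (Ioc a b)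
  set k : ℝ → ℝ → G := fun t s => (Ioi t).indicator (fun s => B (f t) (g s)) s
  have hk : Function.uncurry k =
      {p : ℝ × ℝ | p.1 < p.2}.indicator (fun p => B (f p.1) (g p.2)) := by
    ext p; simp [k, indicator_apply, Function.uncurry]
  have hk_int : Integrable (Function.uncurry k) (μ.prod μ) := by
    rw [hk]
    refine (((hf.norm.mul_prod hg.norm).const_mul ‖B‖).mono'
      (B.aestronglyMeasurable_comp₂ hf.aestronglyMeasurable.comp_fst
        hg.aestronglyMeasurable.comp_snd) ?_).indicator
      (measurableSet_lt measurable_fst measurable_snd)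
    exact Eventually.of_forall fun p => (B.le_opNorm₂ _ _).trans_eq (mul_assoc _ _ _)
  have hinner_left : ∀ t ∈ Ioc a b, ∫ s, k t s ∂μ = B (f t) (∫ s in t..b, g s) := by
    intro t ht
    rw [setIntegral_indicator measurableSet_Ioi, Ioc_inter_Ioi, max_eq_right ht.1.le,
      intervalIntegral.integral_of_le ht.2,
      (B (f t)).integral_comp_comm (hg.mono_set (Ioc_subset_Ioc_left ht.1.le))]
  have hinner_right : ∀ s ∈ Ioc a b, ∫ t, k t s ∂μ = B (∫ t in a..s, f t) (g s) := by
    intro s hs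
    have hks : (fun t => k t s) = (Iio s).indicator (fun t => B (f t) (g s)) := by
      ext t; simp [k, indicator_apply]
    have hIoo : Ioc a b ∩ Iio s = Ioo a s := by
      ext t; simp only [mem_inter_iff, mem_Ioc, mem_Iio, mem_Ioo]; grind
    rw [hks, setIntegral_indicator measurableSet_Iio, hIoo, ← integral_Ioc_eq_integral_Ioo,
      intervalIntegral.integral_of_le hs.1.le]
    exact (B.flip (g s)).integral_comp_comm (hf.mono_set (Ioc_subset_Ioc_right hs.2))
  rw [intervalIntegral.integral_of_le hab, intervalIntegral.integral_of_le hab,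
    ← setIntegral_congr_fun measurableSet_Ioc hinner_left,
    ← setIntegral_congr_fun measurableSet_Ioc hinner_right]
  exact integral_integral_swap hk_int

theorem integral_bilinear_deriv_eq_sub_of_primitive {u u' : ℝ → E} {v v' : ℝ → F} {a b : ℝ}
    (hab : a ≤ b) (hu' : IntervalIntegrable u' volume a b)
    (hu : ∀ x ∈ Icc a b, u x = u a + ∫ t in a..x, u' t)
    (hv : ∀ x ∈ Icc a b, HasDerivAt v (v' x) x) (hv' : IntervalIntegrable v' volume a b) :
    ∫ x in a..b, B (u' x) (v x) + B (u x) (v' x) = B (u b) (v b) - B (u a) (v a) := by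
  have hu_cont := continuousOn_of_eq_add_primitive hab hu' hu
  have hv_cont : ContinuousOn v (Icc a b) := fun x hx => (hv x hx).continuousAt.continuousWithinAt
  rw [← uIcc_of_le hab] at hu hv hu_cont hv_cont
  have hv_ftc : ∀ t ∈ uIcc a b, ∫ s in t..b, v' s = v b - v t := fun t ht =>
    intervalIntegral.integral_eq_sub_of_hasDerivAt
      (fun x hx => hv x (uIcc_subset_uIcc_right ht hx)) (hv'.mono_set (uIcc_subset_uIcc_right ht))
  have hu'_int : ∫ t in a..b, u' t = u b - u a := eq_sub_of_add_eq' (hu b right_mem_uIcc).symm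
  have hsplit : ∫ x in a..b, B (u x) (v' x) =
      (∫ x in a..b, B (u a) (v' x)) + ∫ x in a..b, B (∫ t in a..x, u' t) (v' x) := by
    rw [← intervalIntegral.integral_add (hv'.continuousOn_bilinear B continuousOn_const)
      (hv'.continuousOn_bilinear B
        (intervalIntegral.continuousOn_primitive_interval' hu' left_mem_uIcc))]
    refine intervalIntegral.integral_congr fun x hx => ?_
    simp only [hu x hx, map_add, _root_.add_apply]
  have hswap : ∫ x in a..b, B (∫ t in a..x, u' t) (v' x) =
      (∫ t in a..b, B (u' t) (v b)) - ∫ t in a..b, B (u' t) (v t) := by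
    rw [← intervalIntegral_bilinear_integral_swap B hab hu' hv', ← intervalIntegral.integral_sub
      (hu'.bilinear_continuousOn B continuousOn_const) (hu'.bilinear_continuousOn B hv_cont)]
    refine intervalIntegral.integral_congr fun t ht => ?_
    simp only [hv_ftc t ht, map_sub]
  have hconst : ∫ t in a..b, B (u' t) (v b) = B (∫ t in a..b, u' t) (v b) :=
    (B.flip (v b)).intervalIntegral_comp_comm hu'
  rw [intervalIntegral.integral_add (hu'.bilinear_continuousOn B hv_cont)
      (hv'.continuousOn_bilinear B hu_cont), hsplit, hswap, hconst,
    (B (u a)).intervalIntegral_comp_comm hv',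
    intervalIntegral.integral_eq_sub_of_hasDerivAt hv hv', hu'_int]
  simp only [map_sub, _root_.sub_apply]
  abel

end BilinearIntegrationByParts

theorem Matrix.integrable_of_forall_integrable_apply {α ι κ 𝕜 : Type*} [MeasurableSpace α]
    {μ : Measure α} [Fintype ι] [Fintype κ] [DecidableEq ι] [DecidableEq κ] [NormedField 𝕜]
    {A : α → Matrix ι κ 𝕜} (hA : ∀ i j, Integrable (fun x => A x i j) μ) : Integrable A μ := by
  have hA_sum : A = fun x => ∑ i, ∑ j, A x i j • Matrix.single i j (1 : 𝕜) := by
    funext x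
    simpa only [Matrix.smul_single, smul_eq_mul, mul_one] using matrix_eq_sum_single (A x)
  rw [hA_sum]
  exact integrable_finsetSum _ fun i _ => integrable_finsetSum _ fun j _ => (hA i j).smul_const _

theorem Matrix.intervalIntegrable_of_forall_memLp_apply {ι κ 𝕜 : Type*} [Fintype ι] [Fintype κ]
    [DecidableEq ι] [DecidableEq κ] [NormedField 𝕜] {A : ℝ → Matrix ι κ 𝕜} {a b : ℝ}
    {p : ENNReal} (hab : a ≤ b) (hp : 1 ≤ p)
    (hA : ∀ i j, MemLp (fun x => A x i j) p (volume.restrict (Ioo a b))) :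
    IntervalIntegrable A volume a b := by
  have : IsFiniteMeasure (volume.restrict (Ioo a b)) :=
    isFiniteMeasure_restrict.2 measure_Ioo_lt_top.ne
  rw [intervalIntegrable_iff_integrableOn_Ioo_of_le hab]
  exact Matrix.integrable_of_forall_integrable_apply fun i j => (hA i j).integrable hp

theorem IsMatSol.wronskian_eq {m : ℕ} {Q : ℝ → Mat m} {lam : ℂ} {Y Y' Z Z' : ℝ → Mat m} {b : ℝ}
    (hY : IsMatSol Q lam Y Y') (hZ : IsMatSolR Q lam Z Z') (hb : 0 ≤ b)
    (hQ : IntervalIntegrable Q volume 0 b) :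
    Z' b * Y b - Z b * Y' b = Z' 0 * Y 0 - Z 0 * Y' 0 := by
  obtain ⟨hY_deriv, hY'⟩ := hY
  obtain ⟨hZ_deriv, hZ'⟩ := hZ
  have hY_cont : Continuous Y := continuous_iff_continuousAt.2 fun x => (hY_deriv x).continuousAt
  have hZ_cont : Continuous Z := continuous_iff_continuousAt.2 fun x => (hZ_deriv x).continuousAt
  have hY'' : IntervalIntegrable (fun t => Q t * Y t - lam • Y t) volume 0 b :=
    (hQ.mul_continuousOn hY_cont.continuousOn).sub ((hY_cont.const_smul lam).intervalIntegrable _ _)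
  have hZ'' : IntervalIntegrable (fun t => Z t * Q t - lam • Z t) volume 0 b :=
    (hQ.continuousOn_mul hZ_cont.continuousOn).sub ((hZ_cont.const_smul lam).intervalIntegrable _ _)
  have hY'_int : IntervalIntegrable Y' volume 0 b :=
    (continuousOn_of_eq_add_primitive hb hY'' fun x _ => hY' x).intervalIntegrable_of_Icc hb
  have hZ'_int : IntervalIntegrable Z' volume 0 b :=
    (continuousOn_of_eq_add_primitive hb hZ'' fun x _ => hZ' x).intervalIntegrable_of_Icc hb
  have hZY := integral_bilinear_deriv_eq_sub_of_primitive (ContinuousLinearMap.mul ℝ (Mat m)) hb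
    hZ'' (fun x _ => hZ' x) (fun x _ => hY_deriv x) hY'_int
  have hYZ := integral_bilinear_deriv_eq_sub_of_primitive (ContinuousLinearMap.mul ℝ (Mat m)).flip
    hb hY'' (fun x _ => hY' x) (fun x _ => hZ_deriv x) hZ'_int
  simp only [ContinuousLinearMap.mul_apply', ContinuousLinearMap.flip_apply] at hZY hYZ
  rw [sub_eq_sub_iff_sub_eq_sub, ← hZY, ← hYZ]
  congr 1 with t
  simp only [sub_mul, mul_sub, mul_assoc, smul_mul_assoc, mul_smul_comm]

theorem statement9_general
    (m : ℕ)
    (Q : ℝ → Mat m)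
    (hQL2 : ∀ j k : Fin m, MemLp (fun x => Q x j k) 2 (volume.restrict (Set.Ioo 0 Real.pi)))
    (h H : Mat m) (lam : ℂ)
    -- the Weyl solution Φ of L at λ : U(Φ) = I, V(Φ) = 0
    (Φ Φ' : ℝ → Mat m)
    (hΦsol : IsMatSol Q lam Φ Φ')
    (hΦU : Φ' 0 - h * Φ 0 = 1)
    (hΦV : Φ' Real.pi + H * Φ Real.pi = 0)
    -- the Weyl solution Φ* of L* at λ : U*(Φ*) = I, V*(Φ*) = 0
    (Φs Φs' : ℝ → Mat m)
    (hΦssol : IsMatSolR Q lam Φs Φs')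
    (hΦsU : Φs' 0 - Φs 0 * h = 1)
    (hΦsV : Φs' Real.pi + Φs Real.pi * H = 0) :
    Φ 0 = Φs 0 := by
  have hQ : IntervalIntegrable Q volume 0 Real.pi :=
    Matrix.intervalIntegrable_of_forall_memLp_apply Real.pi_pos.le one_le_two hQL2
  have hW := hΦsol.wronskian_eq hΦssol Real.pi_pos.le hQ
  have hW_pi : Φs' Real.pi * Φ Real.pi - Φs Real.pi * Φ' Real.pi = 0 := by
    rw [eq_neg_of_add_eq_zero_left hΦV, eq_neg_of_add_eq_zero_left hΦsV]
    noncomm_ring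
  have hW_zero : Φs' 0 * Φ 0 - Φs 0 * Φ' 0 = Φ 0 - Φs 0 := by
    rw [sub_eq_iff_eq_add.mp hΦU, sub_eq_iff_eq_add.mp hΦsU]
    noncomm_ring
  rw [← sub_eq_zero, ← hW_zero, ← hW, hW_pi]

/-- the Weyl matrices of `L` and of the adjoint-form problem `L*` coincide:
`M(λ) = Φ(0,λ)` equals `M*(λ) = Φ*(0,λ)` for every `λ` at which both Weyl solutions exist. -/
theorem statement9
    (m : ℕ) (hm : 1 ≤ m)
    (Q : ℝ → Mat m)
    (hQL2 : ∀ j k : Fin m, MemLp (fun x => Q x j k) 2 (volume.restrict (Set.Ioo 0 Real.pi)))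
    (h H : Mat m) (lam : ℂ)
    -- the Weyl solution Φ of L at λ : U(Φ) = I, V(Φ) = 0
    (Φ Φ' : ℝ → Mat m)
    (hΦsol : IsMatSol Q lam Φ Φ')
    (hΦU : Φ' 0 - h * Φ 0 = 1)
    (hΦV : Φ' Real.pi + H * Φ Real.pi = 0)
    -- the Weyl solution Φ* of L* at λ : U*(Φ*) = I, V*(Φ*) = 0
    (Φs Φs' : ℝ → Mat m)
    (hΦssol : IsMatSolR Q lam Φs Φs')
    (hΦsU : Φs' 0 - Φs 0 * h = 1)
    (hΦsV : Φs' Real.pi + Φs Real.pi * H = 0) :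
    Φ 0 = Φs 0 :=
  statement9_general m Q hQL2 h H lam Φ Φ' hΦsol hΦU hΦV Φs Φs' hΦssol hΦsU hΦsV
end
end

section
/- Suppose all poles of M(λ) are simple (Assumption 1). Then for every eigenvalue λ₀ of L, with α₀ := Res_{λ=λ₀} M(λ), one has V(φ(·,λ₀)) · α₀ = 0_m, i.e. (φ'(π,λ₀) + H φ(π,λ₀)) α₀ = 0_m. -/
/-!
Multiplying `V(φ(·,λ)) M(λ) = -V(S(·,λ))` by `λ - λ₀` and letting `λ → λ₀` gives
`V(φ(·,λ₀)) α₀ = 0`, since `V(S(·,λ))` stays bounded near `λ₀`. What this needs is the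
continuity of `λ ↦ Y(π,λ), Y'(π,λ)` for solutions with fixed initial data, which follows from a
Gronwall estimate with the integrable kernel `1 + |λ| + ‖Q‖`.
-/

set_option autoImplicit false
set_option maxHeartbeats 1000000

open MeasureTheory Filter Topology Matrix Set intervalIntegral

noncomputable section

attribute [local instance] Matrix.linftyOpNormedAddCommGroup Matrix.linftyOpNormedSpace
  Matrix.linftyOpNormedRing Matrix.linftyOpNormedAlgebra

/-- `Y` (with derivative `Y'`) is a column-vector solution of `-Y'' + Q Y = λ Y`. -/
def IsVecSol {m : ℕ} (Q : ℝ → Mat m) (lam : ℂ) (Y Y' : ℝ → (Fin m → ℂ)) : Prop :=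
  (∀ x : ℝ, HasDerivAt Y (Y' x) x) ∧
  (∀ x : ℝ, Y' x = Y' 0 + ∫ t in (0:ℝ)..x, ((Q t).mulVec (Y t) - lam • Y t))

/-- `Y` is a solution of the boundary value problem `L(Q,h,H)` at `λ` (possibly zero):
a solution of the equation satisfying `U(Y) = 0`, `V(Y) = 0`. -/
def IsBdSol {m : ℕ} (Q : ℝ → Mat m) (h H : Mat m) (lam : ℂ) (Y : ℝ → (Fin m → ℂ)) : Prop :=
  ∃ Y' : ℝ → (Fin m → ℂ), IsVecSol Q lam Y Y' ∧
    Y' 0 = h.mulVec (Y 0) ∧ Y' Real.pi + H.mulVec (Y Real.pi) = 0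

-- The ℓ∞-operator-norm structure on matrices is only a local instance, and instance search does
-- not see through its topology to the one `Matrix` carries.
instance (m : ℕ) : ENormedAddCommMonoid (Mat m) := NormedAddCommGroup.toENormedAddCommMonoid

instance (m : ℕ) : TopologicalSpace.PseudoMetrizableSpace (Mat m) :=
  inferInstanceAs (TopologicalSpace.PseudoMetrizableSpace (Fin m → Fin m → ℂ))

lemma IntervalIntegrable.mono_set_of_le {E : Type*} [NormedAddCommGroup E] {f : ℝ → E}
    {a b c d : ℝ} (hf : IntervalIntegrable f volume a b) (hac : a ≤ c) (hcd : c ≤ d)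
    (hdb : d ≤ b) : IntervalIntegrable f volume c d :=
  hf.mono_set (uIcc_subset_uIcc (mem_uIcc_of_le hac (hcd.trans hdb))
    (mem_uIcc_of_le (hac.trans hcd) hdb))

section Gronwall

variable {k f : ℝ → ℝ} {a b : ℝ}

lemma le_of_le_add_integral_of_integral_le_half (hk0 : ∀ t, 0 ≤ k t)
    (hk : IntervalIntegrable k volume 0 b) (hf : ContinuousOn f (Icc 0 b))
    (hf0 : ∀ x ∈ Icc 0 b, 0 ≤ f x) (hfk : ∀ x ∈ Icc 0 b, f x ≤ a + ∫ t in 0..x, k t * f t)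
    {u v B : ℝ} (hu : 0 ≤ u) (huv : u ≤ v) (hvb : v ≤ b) (hsmall : ∫ t in u..v, k t ≤ 1 / 2)
    (hB : ∀ x ∈ Icc 0 u, f x ≤ B) :
    ∀ x ∈ Icc u v, f x ≤ 2 * (a + (∫ t in 0..u, k t) * B) := by
  have hkf : IntervalIntegrable (fun t => k t * f t) volume 0 b :=
    hk.mul_continuousOn (by rwa [uIcc_of_le (hu.trans (huv.trans hvb))])
  obtain ⟨w, hw, hwmax⟩ := isCompact_Icc.exists_isMaxOn (nonempty_Icc.2 huv)
    (hf.mono (Icc_subset_Icc hu hvb))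
  have hwb : w ∈ Icc 0 b := ⟨hu.trans hw.1, hw.2.trans hvb⟩
  have hleft : ∫ t in 0..u, k t * f t ≤ (∫ t in 0..u, k t) * B := by
    rw [← intervalIntegral.integral_mul_const]
    refine intervalIntegral.integral_mono_on hu (hkf.mono_set_of_le le_rfl hu (huv.trans hvb))
      ((hk.mono_set_of_le le_rfl hu (huv.trans hvb)).mul_const B) fun t ht => ?_
    exact mul_le_mul_of_nonneg_left (hB t ht) (hk0 t)
  have hright : ∫ t in u..w, k t * f t ≤ 1 / 2 * f w := by
    calc ∫ t in u..w, k t * f t ≤ ∫ t in u..w, k t * f w := by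
          refine intervalIntegral.integral_mono_on hw.1 (hkf.mono_set_of_le hu hw.1 hwb.2)
            ((hk.mono_set_of_le hu hw.1 hwb.2).mul_const _) fun t ht => ?_
          exact mul_le_mul_of_nonneg_left (hwmax ⟨ht.1, ht.2.trans hw.2⟩) (hk0 t)
      _ = (∫ t in u..w, k t) * f w := intervalIntegral.integral_mul_const _ _
      _ ≤ 1 / 2 * f w := by
          refine mul_le_mul_of_nonneg_right ((intervalIntegral.integral_mono_interval le_rfl
            hw.1 hw.2 (Eventually.of_forall hk0) (hk.mono_set_of_le hu huv hvb)).trans hsmall)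
            (hf0 w hwb)
  have hsplit := intervalIntegral.integral_add_adjacent_intervals
    (hkf.mono_set_of_le le_rfl hu (huv.trans hvb)) (hkf.mono_set_of_le hu hw.1 hwb.2)
  intro x hx
  have hxw : f x ≤ f w := hwmax hx
  linarith [hfk w hwb]

lemma exists_pos_forall_integral_le (hb : 0 ≤ b) (hk : IntervalIntegrable k volume 0 b)
    {ε : ℝ} (hε : 0 < ε) :
    ∃ δ > 0, ∀ u v, 0 ≤ u → u ≤ v → v ≤ b → v - u ≤ δ → ∫ t in u..v, k t ≤ ε := by
  have hK : ContinuousOn (fun x => ∫ t in 0..x, k t) (Icc 0 b) := by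
    simpa only [uIcc_of_le hb] using
      intervalIntegral.continuousOn_primitive_interval' hk left_mem_uIcc
  obtain ⟨δ, hδ, hδK⟩ :=
    Metric.uniformContinuousOn_iff_le.1 (isCompact_Icc.uniformContinuousOn_of_continuous hK) ε hε
  refine ⟨δ, hδ, fun u v hu huv hvb hvu => ?_⟩
  have hdist := hδK v ⟨hu.trans huv, hvb⟩ u ⟨hu, huv.trans hvb⟩
    (by rwa [Real.dist_eq, abs_of_nonneg (sub_nonneg.2 huv)])
  rw [← intervalIntegral.integral_interval_sub_left (hk.mono_set_of_le le_rfl (hu.trans huv) hvb)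
    (hk.mono_set_of_le le_rfl hu (huv.trans hvb))]
  exact (le_abs_self _).trans hdist

/-- Gronwall's inequality with an integrable kernel: cutting `[0, b]` into pieces on which
`∫ k ≤ 1/2`, each piece multiplies the bound by at most `2 + 2 ∫₀ᵇ k`. -/
lemma exists_le_mul_of_le_add_integral (hb : 0 ≤ b) (hk0 : ∀ t, 0 ≤ k t)
    (hk : IntervalIntegrable k volume 0 b) :
    ∃ C, ∀ f : ℝ → ℝ, ∀ a, 0 ≤ a → ContinuousOn f (Icc 0 b) → (∀ x ∈ Icc 0 b, 0 ≤ f x) →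
      (∀ x ∈ Icc 0 b, f x ≤ a + ∫ t in 0..x, k t * f t) → f b ≤ C * a := by
  obtain ⟨δ, hδ, hsmall⟩ := exists_pos_forall_integral_le hb hk (by norm_num : (0 : ℝ) < 1 / 2)
  obtain ⟨N, hN⟩ := exists_nat_ge (b / δ)
  set K := ∫ t in 0..b, k t
  have hK : 0 ≤ K := intervalIntegral.integral_nonneg hb fun t _ => hk0 t
  refine ⟨(2 + 2 * K) ^ N, fun f a ha hf hf0 hfk => ?_⟩
  have hpow : ∀ n : ℕ, a ≤ (2 + 2 * K) ^ n * a := fun n =>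
    le_mul_of_one_le_left ha (one_le_pow₀ (by linarith))
  have hgrowth : ∀ n : ℕ, ∀ x ∈ Icc 0 b, x ≤ n * δ → f x ≤ (2 + 2 * K) ^ n * a := by
    intro n
    induction n with
    | zero =>
      intro x hx hxn
      obtain rfl : x = 0 := le_antisymm (by simpa using hxn) hx.1
      simpa using hfk 0 ⟨le_rfl, hb⟩
    | succ n ih =>
      intro x hx hxn
      rcases le_or_gt x (n * δ) with hxn' | hxn'
      · exact (ih x hx hxn').trans (mul_le_mul_of_nonneg_right
          (pow_le_pow_right₀ (by linarith) n.le_succ) ha)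
      · have hu : 0 ≤ (n : ℝ) * δ := by positivity
        have hstep := le_of_le_add_integral_of_integral_le_half hk0 hk hf hf0 hfk hu hxn'.le hx.2
          (hsmall _ _ hu hxn'.le hx.2 (by push_cast at hxn; linarith))
          (fun y hy => ih y ⟨hy.1, hy.2.trans (hxn'.le.trans hx.2)⟩ hy.2) x ⟨hxn'.le, le_rfl⟩
        have hKu : ∫ t in 0..(n : ℝ) * δ, k t ≤ K :=
          intervalIntegral.integral_mono_interval le_rfl hu (hxn'.le.trans hx.2)
            (Eventually.of_forall hk0) hk
        have hAn : 0 ≤ (2 + 2 * K) ^ n * a := (ha.trans (hpow n))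
        calc f x ≤ 2 * (a + (∫ t in 0..(n : ℝ) * δ, k t) * ((2 + 2 * K) ^ n * a)) := hstep
          _ ≤ 2 * ((2 + 2 * K) ^ n * a + K * ((2 + 2 * K) ^ n * a)) := by
              gcongr
              exact hpow n
          _ = (2 + 2 * K) ^ (n + 1) * a := by ring
  exact hgrowth N b ⟨hb, le_rfl⟩ (by rwa [div_le_iff₀ hδ] at hN)

end Gronwall

lemma Matrix.intervalIntegrable_of_memLp_two {m : ℕ} {Q : ℝ → Mat m} {b : ℝ} (hb : 0 ≤ b)
    (hQ : ∀ j k, MemLp (fun x => Q x j k) 2 (volume.restrict (Ioo 0 b))) :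
    IntervalIntegrable Q volume 0 b := by
  rw [intervalIntegrable_iff_integrableOn_Ioo_of_le hb]
  have hsum : Q = fun t => ∑ j, ∑ k, Q t j k • Matrix.single j k (1 : ℂ) := by
    ext t : 1
    conv_lhs => rw [matrix_eq_sum_single (Q t)]
    simp only [smul_single, smul_eq_mul, mul_one]
  rw [hsum]
  exact integrable_finsetSum _ fun j _ => integrable_finsetSum _ fun k _ =>
    ((hQ j k).integrable one_le_two).smul_const _

lemma norm_mul_sub_smul_add_smul_le {A : Type*} [NormedRing A] [NormedAlgebra ℂ A]
    (q d p : A) (z w : ℂ) :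
    ‖q * d - z • d + (w - z) • p‖ ≤ (‖q‖ + ‖z‖) * ‖d‖ + ‖z - w‖ * ‖p‖ := by
  calc ‖q * d - z • d + (w - z) • p‖ ≤ ‖q‖ * ‖d‖ + ‖z‖ * ‖d‖ + ‖w - z‖ * ‖p‖ :=
        (norm_add_le _ _).trans (add_le_add ((norm_sub_le _ _).trans
          (add_le_add (norm_mul_le _ _) (norm_smul_le _ _))) (norm_smul_le _ _))
    _ = (‖q‖ + ‖z‖) * ‖d‖ + ‖z - w‖ * ‖p‖ := by rw [norm_sub_rev]; ring

section MatrixSolutions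

variable {m : ℕ} {Q : ℝ → Mat m} {b : ℝ} {z w : ℂ} {Y Y' P P' : ℝ → Mat m}

lemma IsMatSol.continuous_s11 (hY : IsMatSol Q z Y Y') : Continuous Y :=
  continuous_iff_continuousAt.2 fun x => (hY.1 x).continuousAt

lemma IsMatSol.intervalIntegrable (hQ : IntervalIntegrable Q volume 0 b)
    (hY : IsMatSol Q z Y Y') : IntervalIntegrable (fun t => Q t * Y t - z • Y t) volume 0 b :=
  (hQ.mul_continuousOn hY.continuous_s11.continuousOn).sub
    ((hY.continuous_s11.const_smul z : Continuous fun t => z • Y t).intervalIntegrable 0 b)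

lemma IsMatSol.continuousOn_deriv (hb : 0 ≤ b) (hQ : IntervalIntegrable Q volume 0 b)
    (hY : IsMatSol Q z Y Y') : ContinuousOn Y' (Icc 0 b) := by
  have hprim := intervalIntegral.continuousOn_primitive_interval' (hY.intervalIntegrable hQ)
    left_mem_uIcc
  rw [uIcc_of_le hb] at hprim
  exact (continuousOn_const.add hprim).congr fun x _ => hY.2 x

lemma IsMatSol.sub_eq_integral (hb : 0 ≤ b) (hQ : IntervalIntegrable Q volume 0 b)
    (hY : IsMatSol Q z Y Y') (hP : IsMatSol Q w P P') (hYP : Y 0 = P 0) {x : ℝ}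
    (hx : x ∈ Icc 0 b) : Y x - P x = ∫ t in 0..x, (Y' t - P' t) := by
  have hcont : ContinuousOn (fun t => Y' t - P' t) (uIcc 0 x) := by
    rw [uIcc_of_le hx.1]
    exact ((hY.continuousOn_deriv hb hQ).sub (hP.continuousOn_deriv hb hQ)).mono
      (Icc_subset_Icc le_rfl hx.2)
  rw [intervalIntegral.integral_eq_sub_of_hasDerivAt (fun t _ => (hY.1 t).sub (hP.1 t))
    hcont.intervalIntegrable, Pi.sub_apply, Pi.sub_apply, hYP, sub_self, sub_zero]

lemma IsMatSol.deriv_sub_eq_integral (hQ : IntervalIntegrable Q volume 0 b)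
    (hY : IsMatSol Q z Y Y') (hP : IsMatSol Q w P P') (hYP' : Y' 0 = P' 0) {x : ℝ}
    (hx : x ∈ Icc 0 b) :
    Y' x - P' x = ∫ t in 0..x, (Q t * (Y t - P t) - z • (Y t - P t) + (w - z) • P t) := by
  rw [hY.2 x, hP.2 x, hYP', add_sub_add_left_eq_sub, ← intervalIntegral.integral_sub
    ((hY.intervalIntegrable hQ).mono_set_of_le le_rfl hx.1 hx.2)
    ((hP.intervalIntegrable hQ).mono_set_of_le le_rfl hx.1 hx.2)]
  congr 1
  funext t
  simp only [mul_sub, smul_sub, sub_smul]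
  abel

lemma IsMatSol.norm_sub_add_norm_deriv_sub_le (hb : 0 ≤ b)
    (hQ : IntervalIntegrable Q volume 0 b) (hY : IsMatSol Q z Y Y') (hP : IsMatSol Q w P P')
    (hYP : Y 0 = P 0) (hYP' : Y' 0 = P' 0) {c : ℝ} (hz : ‖z‖ ≤ c) {x : ℝ} (hx : x ∈ Icc 0 b) :
    ‖Y x - P x‖ + ‖Y' x - P' x‖ ≤ ‖z - w‖ * (∫ t in 0..b, ‖P t‖) +
      ∫ t in 0..x, (1 + c + ‖Q t‖) * (‖Y t - P t‖ + ‖Y' t - P' t‖) := by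
  set k : ℝ → ℝ := fun t => 1 + c + ‖Q t‖
  have hk1 : ∀ t, 1 ≤ k t := fun t => by linarith [norm_nonneg z, norm_nonneg (Q t)]
  have hkx : IntervalIntegrable k volume 0 x :=
    (intervalIntegrable_const.add hQ.norm).mono_set_of_le le_rfl hx.1 hx.2
  have hDc : Continuous fun t => Y t - P t := hY.continuous_s11.sub hP.continuous_s11
  have hEc : ContinuousOn (fun t => Y' t - P' t) (uIcc 0 x) := by
    rw [uIcc_of_le hx.1]
    exact ((hY.continuousOn_deriv hb hQ).sub (hP.continuousOn_deriv hb hQ)).mono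
      (Icc_subset_Icc le_rfl hx.2)
  have hPx : IntervalIntegrable (fun t => ‖P t‖) volume 0 x :=
    hP.continuous_s11.norm.intervalIntegrable 0 x
  have hD : ‖Y x - P x‖ ≤ ∫ t in 0..x, ‖Y' t - P' t‖ := by
    rw [hY.sub_eq_integral hb hQ hP hYP hx]
    exact intervalIntegral.norm_integral_le_integral_norm hx.1
  have hE : ‖Y' x - P' x‖ ≤ ∫ t in 0..x, (k t * ‖Y t - P t‖ + ‖z - w‖ * ‖P t‖) := by
    rw [hY.deriv_sub_eq_integral hQ hP hYP' hx]
    refine intervalIntegral.norm_integral_le_of_norm_le hx.1 (Eventually.of_forall fun t _ => ?_)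
      ((hkx.mul_continuousOn hDc.norm.continuousOn).add (hPx.const_mul _))
    refine (norm_mul_sub_smul_add_smul_le _ _ _ _ _).trans ?_
    gcongr
    simp only [k]
    linarith
  have hpoint : ∀ t, ‖Y' t - P' t‖ + k t * ‖Y t - P t‖ ≤
      k t * (‖Y t - P t‖ + ‖Y' t - P' t‖) := fun t => by
    nlinarith [hk1 t, norm_nonneg (Y' t - P' t)]
  have hPb : ∫ t in 0..x, ‖P t‖ ≤ ∫ t in 0..b, ‖P t‖ :=
    intervalIntegral.integral_mono_interval le_rfl hx.1 hx.2
      (Eventually.of_forall fun t => norm_nonneg (P t)) (hP.continuous_s11.norm.intervalIntegrable 0 b)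
  have hsum : (∫ t in 0..x, ‖Y' t - P' t‖) + ∫ t in 0..x, (k t * ‖Y t - P t‖ + ‖z - w‖ * ‖P t‖)
      ≤ (∫ t in 0..x, k t * (‖Y t - P t‖ + ‖Y' t - P' t‖)) + ‖z - w‖ * ∫ t in 0..x, ‖P t‖ := by
    rw [intervalIntegral.integral_add (hkx.mul_continuousOn hDc.norm.continuousOn)
      (hPx.const_mul _), intervalIntegral.integral_const_mul, ← add_assoc,
      ← intervalIntegral.integral_add hEc.norm.intervalIntegrable
      (hkx.mul_continuousOn hDc.norm.continuousOn)]
    gcongr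
    exact intervalIntegral.integral_mono_on hx.1
      (hEc.norm.intervalIntegrable.add (hkx.mul_continuousOn hDc.norm.continuousOn))
      (hkx.mul_continuousOn (hDc.norm.continuousOn.add hEc.norm)) fun t _ => hpoint t
  have := mul_le_mul_of_nonneg_left hPb (norm_nonneg (z - w))
  linarith

lemma IsMatSol.exists_norm_sub_le (hb : 0 ≤ b) (hQ : IntervalIntegrable Q volume 0 b)
    (hP : IsMatSol Q w P P') {c : ℝ} (hc : 0 ≤ c) :
    ∃ C, ∀ z Y Y', ‖z‖ ≤ c → IsMatSol Q z Y Y' → Y 0 = P 0 → Y' 0 = P' 0 →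
      ‖Y b - P b‖ + ‖Y' b - P' b‖ ≤ C * ‖z - w‖ := by
  obtain ⟨C, hC⟩ := exists_le_mul_of_le_add_integral (k := fun t => 1 + c + ‖Q t‖) hb
    (fun t => by linarith [norm_nonneg (Q t)]) (intervalIntegrable_const.add hQ.norm)
  refine ⟨C * ∫ t in 0..b, ‖P t‖, fun z Y Y' hz hY hYP hYP' => ?_⟩
  have hf : ContinuousOn (fun x => ‖Y x - P x‖ + ‖Y' x - P' x‖) (Icc 0 b) :=
    (hY.continuous_s11.sub hP.continuous_s11).norm.continuousOn.add
      ((hY.continuousOn_deriv hb hQ).sub (hP.continuousOn_deriv hb hQ)).norm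
  have := hC _ (‖z - w‖ * ∫ t in 0..b, ‖P t‖)
    (mul_nonneg (norm_nonneg _) (intervalIntegral.integral_nonneg hb fun t _ => norm_nonneg _))
    hf (fun x _ => by positivity)
    (fun x hx => hY.norm_sub_add_norm_deriv_sub_le hb hQ hP hYP hYP' hz hx)
  linarith

end MatrixSolutions

lemma continuous_of_isMatSol {m : ℕ} {Q : ℝ → Mat m} {b : ℝ} (hb : 0 ≤ b)
    (hQ : IntervalIntegrable Q volume 0 b) {Y Y' : ℂ → ℝ → Mat m} {Y₀ Y₁ : Mat m}
    (hY : ∀ z, IsMatSol Q z (Y z) (Y' z)) (hY₀ : ∀ z, Y z 0 = Y₀) (hY₁ : ∀ z, Y' z 0 = Y₁) :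
    Continuous (fun z => Y z b) ∧ Continuous (fun z => Y' z b) := by
  simp only [continuous_iff_continuousAt, ← forall_and]
  intro w
  obtain ⟨C, hC⟩ := (hY w).exists_norm_sub_le hb hQ (by positivity : 0 ≤ ‖w‖ + 1)
  have hbound : ∀ᶠ z in 𝓝 w, ‖Y z b - Y w b‖ + ‖Y' z b - Y' w b‖ ≤ C * ‖z - w‖ := by
    filter_upwards [Metric.closedBall_mem_nhds w one_pos] with z hz
    refine hC z _ _ ?_ (hY z) (by rw [hY₀, hY₀]) (by rw [hY₁, hY₁])
    rw [Metric.mem_closedBall, dist_eq_norm] at hz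
    linarith [norm_le_norm_add_norm_sub' z w]
  have hlim : Tendsto (fun z => C * ‖z - w‖) (𝓝 w) (𝓝 0) := by
    simpa using (((continuous_sub_right w).norm).const_mul C).tendsto w
  constructor
  · refine tendsto_iff_norm_sub_tendsto_zero.2 (squeeze_zero' (Eventually.of_forall fun z =>
      norm_nonneg _) (hbound.mono fun z hz => ?_) hlim)
    linarith [norm_nonneg (Y' z b - Y' w b)]
  · refine tendsto_iff_norm_sub_tendsto_zero.2 (squeeze_zero' (Eventually.of_forall fun z =>
      norm_nonneg _) (hbound.mono fun z hz => ?_) hlim)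
    linarith [norm_nonneg (Y z b - Y w b)]

lemma mul_eq_zero_of_isResidueAt_neg_inv_mul {m : ℕ} {A B M : ℂ → Mat m} {z₀ : ℂ} {α : Mat m}
    (hA : ContinuousAt A z₀) (hB : ContinuousAt B z₀) (hM : ∀ z, M z = -((A z)⁻¹ * B z))
    (hα : IsResidueAt M z₀ α) : A z₀ * α = 0 := by
  have hbound : ∀ z, ‖A z * ((z - z₀) • M z)‖ ≤ ‖(z - z₀) • B z‖ := by
    intro z
    by_cases hu : IsUnit (A z).det
    · rw [hM, mul_smul_comm, mul_neg, Matrix.mul_nonsing_inv_cancel_left _ _ hu, smul_neg,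
        norm_neg]
    · -- the junk value `(A z)⁻¹ = 0` makes `M z = 0` here
      simp [hM, Matrix.nonsing_inv_apply_not_isUnit _ hu]
  have hzero : Tendsto (fun z => ‖(z - z₀) • B z‖) (𝓝[≠] z₀) (𝓝 0) := by
    have hcont : ContinuousAt (fun z => ‖(z - z₀) • B z‖) z₀ :=
      ((continuous_sub_right z₀).continuousAt.smul hB).norm
    simpa using hcont.tendsto.mono_left nhdsWithin_le_nhds
  have hlim : Tendsto (fun z => A z * ((z - z₀) • M z)) (𝓝[≠] z₀) (𝓝 (A z₀ * α)) :=
    (hA.tendsto.mono_left nhdsWithin_le_nhds).mul hα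
  exact tendsto_nhds_unique hlim (squeeze_zero_norm hbound hzero)

theorem statement11_general
    (m : ℕ)
    (Q : ℝ → Mat m)
    (hQL2 : ∀ j k : Fin m, MemLp (fun x => Q x j k) 2 (volume.restrict (Set.Ioo 0 Real.pi)))
    (h H : Mat m)
    (φ φ' S S' : ℂ → ℝ → Mat m)
    (hφsol : ∀ z : ℂ, IsMatSol Q z (φ z) (φ' z))
    (hφ0 : ∀ z : ℂ, φ z 0 = 1) (hφ'0 : ∀ z : ℂ, φ' z 0 = h)
    (hSsol : ∀ z : ℂ, IsMatSol Q z (S z) (S' z))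
    (hS0 : ∀ z : ℂ, S z 0 = 0) (hS'0 : ∀ z : ℂ, S' z 0 = 1)
    -- the Weyl matrix M(λ) = −(V(φ))⁻¹ V(S)
    (M : ℂ → Mat m)
    (hM : ∀ z : ℂ, M z =
      -((φ' z Real.pi + H * φ z Real.pi)⁻¹ * (S' z Real.pi + H * S z Real.pi)))
    (lam₀ : ℂ)
    (α₀ : Mat m)
    (hα₀ : IsResidueAt M lam₀ α₀) :
    (φ' lam₀ Real.pi + H * φ lam₀ Real.pi) * α₀ = 0 := by
  have hQ := Matrix.intervalIntegrable_of_memLp_two Real.pi_pos.le hQL2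
  obtain ⟨hφ, hφ'⟩ := continuous_of_isMatSol Real.pi_pos.le hQ hφsol hφ0 hφ'0
  obtain ⟨hS, hS'⟩ := continuous_of_isMatSol Real.pi_pos.le hQ hSsol hS0 hS'0
  exact mul_eq_zero_of_isResidueAt_neg_inv_mul (hφ'.add (continuous_const.mul hφ)).continuousAt
    (hS'.add (continuous_const.mul hS)).continuousAt hM hα₀

/-- eq. (17): under Assumption 1, for every eigenvalue `λ₀` of `L` with
residue `α₀ = Res_{λ=λ₀} M(λ)` one has `V(φ(·,λ₀)) α₀ = 0`. -/
theorem statement11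
    (m : ℕ) (hm : 1 ≤ m)
    (Q : ℝ → Mat m)
    (hQL2 : ∀ j k : Fin m, MemLp (fun x => Q x j k) 2 (volume.restrict (Set.Ioo 0 Real.pi)))
    (h H : Mat m)
    (φ φ' S S' : ℂ → ℝ → Mat m)
    (hφsol : ∀ z : ℂ, IsMatSol Q z (φ z) (φ' z))
    (hφ0 : ∀ z : ℂ, φ z 0 = 1) (hφ'0 : ∀ z : ℂ, φ' z 0 = h)
    (hSsol : ∀ z : ℂ, IsMatSol Q z (S z) (S' z))
    (hS0 : ∀ z : ℂ, S z 0 = 0) (hS'0 : ∀ z : ℂ, S' z 0 = 1)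
    -- the Weyl matrix M(λ) = −(V(φ))⁻¹ V(S)
    (M : ℂ → Mat m)
    (hM : ∀ z : ℂ, M z =
      -((φ' z Real.pi + H * φ z Real.pi)⁻¹ * (S' z Real.pi + H * S z Real.pi)))
    -- Assumption 1
    (hA1 : AllPolesSimple M)
    (lam₀ : ℂ)
    (heig₀ : ∃ Y : ℝ → (Fin m → ℂ), IsBdSol Q h H lam₀ Y ∧ Y ≠ 0)
    (α₀ : Mat m)
    (hα₀ : IsResidueAt M lam₀ α₀) :
    (φ' lam₀ Real.pi + H * φ lam₀ Real.pi) * α₀ = 0 :=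
  statement11_general m Q hQL2 h H φ φ' S S' hφsol hφ0 hφ'0 hSsol hS0 hS'0 M hM lam₀ α₀ hα₀
end
end
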